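/- Let n, f be natural numbers with n > 5f, let P be a multiset of n real numbers, and let U be a submultiset of P of cardinality m with m ≥ n − f. Then for every element p of U, the trimmed range is contained in the range of correct positions: min U ≤ min(p, P_{2f+1}) and max(p, P_{n−2f}) ≤ max U. -/

import Mathlib

/-- `kth P k` is the `k`-th smallest element (1-based, counted with multiplicity)
of the multiset `P` of reals. -/
noncomputable def kth (P : Multiset ℝ) (k : ℕ) : ℝ :=
  (P.sort (· ≤ ·)).getD (k - 1) 0

/-- The minimum of a (nonempty) multiset of reals: its 1st smallest element. -/
noncomputable def mmin (U : Multiset ℝ) : ℝ := kth U 1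

/-- The maximum of a (nonempty) multiset of reals: its `card`-th smallest element. -/
noncomputable def mmax (U : Multiset ℝ) : ℝ := kth U (Multiset.card U)

/-! Write `P = U + V`; then `V` has at most `f` elements. Every position of `P` below `min U`
lies in `V`, so at most `f < 2f + 1` positions are below `min U` and hence `P_{2f+1} ≥ min U`.
Symmetrically at most `f ≤ 2f` positions exceed `max U`, hence `P_{n-2f} ≤ max U`. -/

namespace List.Pairwise

variable {α : Type*} [LinearOrder α] {L : List α} {a : α} {k : ℕ}

lemma le_getElem_of_countP_le (hL : L.Pairwise (· ≤ ·)) (hk : k < L.length)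
    (hc : L.countP (· < a) ≤ k) : a ≤ L[k] := by
  by_contra! hlt
  have hlen : (L.take (k + 1)).length = k + 1 := by simp; omega
  have hprefix : (L.take (k + 1)).countP (· < a) = (L.take (k + 1)).length := by
    refine List.countP_eq_length.mpr fun x hx => ?_
    obtain ⟨i, hi, rfl⟩ := List.getElem_of_mem hx
    rw [List.getElem_take, decide_eq_true_iff]
    refine lt_of_le_of_lt ?_ hlt
    exact hL.rel_get_of_le (a := ⟨i, by omega⟩) (b := ⟨k, hk⟩) (by simp at hi ⊢; omega)
  have := (L.take_sublist (k + 1)).countP_le (p := (· < a))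
  omega

lemma getElem_le_of_countP_le (hL : L.Pairwise (· ≤ ·)) (hk : k < L.length)
    (hc : L.countP (a < ·) ≤ L.length - (k + 1)) : L[k] ≤ a := by
  by_contra! hlt
  have hlen : (L.drop k).length = L.length - k := by simp
  have hsuffix : (L.drop k).countP (a < ·) = (L.drop k).length := by
    refine List.countP_eq_length.mpr fun x hx => ?_
    obtain ⟨i, hi, rfl⟩ := List.getElem_of_mem hx
    rw [List.getElem_drop, decide_eq_true_iff]
    refine hlt.trans_le ?_
    exact hL.rel_get_of_le (a := ⟨k, hk⟩) (b := ⟨k + i, by simp at hi; omega⟩) (by simp)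
  have := (L.drop_sublist k).countP_le (p := (a < ·))
  omega

end List.Pairwise

namespace Multiset

variable {α : Type*} (p : α → Prop) [DecidablePred p]

lemma countP_sort [LinearOrder α] (s : Multiset α) :
    (s.sort (· ≤ ·)).countP (p ·) = s.countP p := by
  rw [← coe_countP, sort_eq]

variable {p}

lemma countP_lt_card_of_mem {s : Multiset α} {x : α} (hx : x ∈ s) (hpx : ¬ p x) :
    s.countP p < card s := by
  have := s.card_eq_countP_add_countP p
  have := countP_pos_of_mem (p := fun y => ¬ p y) hx hpx
  omega

lemma countP_le_card_sub_of_le {U P : Multiset α} (hUP : U ≤ P) (hU : ∀ x ∈ U, ¬ p x) :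
    P.countP p ≤ card P - card U := by
  obtain ⟨V, rfl⟩ := le_iff_exists_add.mp hUP
  rw [countP_add, countP_eq_zero.mpr hU, card_add]
  have := V.countP_le_card p
  omega

end Multiset

section kth

variable {P : Multiset ℝ} {a : ℝ} {k : ℕ}

lemma kth_eq_getElem (hk : k - 1 < Multiset.card P) :
    kth P k = (P.sort (· ≤ ·))[k - 1]'(by simpa using hk) :=
  List.getD_eq_getElem _ _ _

lemma le_kth_of_countP_lt (hk : k ≤ Multiset.card P) (hc : P.countP (· < a) < k) :
    a ≤ kth P k := by
  rw [kth_eq_getElem (by omega)]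
  exact (P.pairwise_sort _).le_getElem_of_countP_le _
    (by rw [Multiset.countP_sort (· < a)]; omega)

lemma kth_le_of_countP_le (hk : 1 ≤ k) (hkP : k ≤ Multiset.card P)
    (hc : P.countP (a < ·) ≤ Multiset.card P - k) : kth P k ≤ a := by
  rw [kth_eq_getElem (by omega)]
  exact (P.pairwise_sort _).getElem_le_of_countP_le _
    (by rw [Multiset.countP_sort (a < ·), Multiset.length_sort]; omega)

end kth

lemma mmin_le {U : Multiset ℝ} {x : ℝ} (hx : x ∈ U) : mmin U ≤ x :=
  kth_le_of_countP_le le_rfl (Multiset.card_pos_iff_exists_mem.mpr ⟨x, hx⟩)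
    (Nat.le_sub_one_of_lt (Multiset.countP_lt_card_of_mem hx (lt_irrefl x)))

lemma le_mmax {U : Multiset ℝ} {x : ℝ} (hx : x ∈ U) : x ≤ mmax U :=
  le_kth_of_countP_lt le_rfl (Multiset.countP_lt_card_of_mem hx (lt_irrefl x))

theorem stmt_2 (n f : ℕ) (hnf : n > 5 * f) (P U : Multiset ℝ)
    (hP : Multiset.card P = n) (hUP : U ≤ P) (m : ℕ) (hm : Multiset.card U = m)
    (hmf : m ≥ n - f) :
    ∀ p ∈ U, mmin U ≤ min p (kth P (2 * f + 1)) ∧ max p (kth P (n - 2 * f)) ≤ mmax U := by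
  intro p hp
  have hbelow : P.countP (· < mmin U) ≤ n - m := hP ▸ hm ▸
    Multiset.countP_le_card_sub_of_le hUP fun x hx => not_lt.mpr (mmin_le hx)
  have habove : P.countP (mmax U < ·) ≤ n - m := hP ▸ hm ▸
    Multiset.countP_le_card_sub_of_le hUP fun x hx => not_lt.mpr (le_mmax hx)
  exact ⟨le_min (mmin_le hp) (le_kth_of_countP_lt (by omega) (by omega)),
    max_le (le_mmax hp) (kth_le_of_countP_le (by omega) (by omega) (by omega))⟩
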